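/- arXiv:2306.14850 — 11 statements merged into one kernel-verified Lean document; each statement's English description precedes it below -/
import Mathlib

section
/- If y = τ (the number of levels), then an instance of the egalitarian committee sequence election problem is a yes-instance if and only if for every level t, the committee C_t* := {u_t(a) : a ∈ A, u_t(a) ≠ ∅} consisting of all candidates nominated at level t has size at most k and committee score at least x; i.e., every agent must be satisfied in every level, which forces choosing all nominated candidates in every level. -/
open scoped Classical

noncomputable def levelScore {A C : Type*} [Fintype A] (u : A → Option C) (S : Finset C) : ℕ :=
  (Finset.univ.filter fun a => ∃ c ∈ S, u a = some c).card

noncomputable def agentScore {A C : Type*} {τ : ℕ} (u : Fin τ → A → Option C)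
    (Cs : Fin τ → Finset C) (a : A) : ℕ :=
  (Finset.univ.filter fun t => ∃ c ∈ Cs t, u t a = some c).card

/-- The committee consisting of all candidates nominated at a level. -/
noncomputable def allNominated {A C : Type*} [Fintype A] [DecidableEq C]
    (u : A → Option C) : Finset C :=
  (Finset.univ.image u).biUnion Option.toFinset


lemma tau_le_agentScore_iff {A C : Type*} {τ : ℕ} (u : Fin τ → A → Option C)
    (Cs : Fin τ → Finset C) (a : A) :
    τ ≤ agentScore u Cs a ↔ ∀ t, ∃ c ∈ Cs t, u t a = some c := by
  unfold agentScore
  constructor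
  · intro h t
    have h1 : (Finset.univ.filter fun t => ∃ c ∈ Cs t, u t a = some c).card ≤ τ := by
      simpa using Finset.card_filter_le (Finset.univ : Finset (Fin τ)) _
    have heq : (Finset.univ.filter fun t => ∃ c ∈ Cs t, u t a = some c) =
        Finset.univ := Finset.eq_univ_of_card _ (by simp; omega)
    have := (Finset.eq_univ_iff_forall.mp heq) t
    simpa using this
  · intro h
    have heq : (Finset.univ.filter fun t => ∃ c ∈ Cs t, u t a = some c) =
        Finset.univ := Finset.eq_univ_iff_forall.mpr fun t => by
      simpa using h t
    simp [heq]

/-- If `y = τ`, an instance is a yes-instance iff the sequence choosing, at every level,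
all nominated candidates is a solution: every agent must be satisfied in every level,
which forces choosing all nominated candidates in every level. -/
theorem gcse_y_eq_tau {A C : Type*} [Fintype A] [DecidableEq C] {τ : ℕ}
    (u : Fin τ → A → Option C) (k x y : ℕ) (hy : y = τ) :
    (∃ Cs : Fin τ → Finset C,
        (∀ t, (Cs t).card ≤ k ∧ x ≤ levelScore (u t) (Cs t)) ∧
        ∀ a, y ≤ agentScore u Cs a)
    ↔
    ((∀ t, (allNominated (u t)).card ≤ k ∧ x ≤ levelScore (u t) (allNominated (u t))) ∧
      ∀ a, y ≤ agentScore u (fun t => allNominated (u t)) a) := by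
  subst hy
  have hmem : ∀ (v : A → Option C) (c : C), c ∈ allNominated v ↔ ∃ a, v a = some c := by
    intro v c
    simp [allNominated, Option.mem_toFinset, Option.mem_def, eq_comm]
  constructor
  · rintro ⟨Cs, hlevel, hagent⟩
    have hall : ∀ a t, ∃ c ∈ Cs t, u t a = some c := fun a =>
      (tau_le_agentScore_iff u Cs a).mp (hagent a)
    refine ⟨fun t => ?_, fun a => ?_⟩
    · obtain ⟨hk, hx⟩ := hlevel t
      constructor
      · refine le_trans (Finset.card_le_card ?_) hk
        intro c hc
        obtain ⟨a, ha⟩ := (hmem (u t) c).mp hc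
        obtain ⟨c', hc', hac'⟩ := hall a t
        rw [ha] at hac'
        obtain rfl : c = c' := by injection hac'
        exact hc'
      · refine le_trans hx (Finset.card_le_card ?_)
        intro a ha
        simp only [Finset.mem_filter] at ha ⊢
        obtain ⟨_, c, hc, hac⟩ := ha
        exact ⟨Finset.mem_univ a, c, (hmem (u t) c).mpr ⟨a, hac⟩, hac⟩
    · refine (tau_le_agentScore_iff u _ a).mpr fun t => ?_
      obtain ⟨c, hc, hac⟩ := hall a t
      exact ⟨c, (hmem (u t) c).mpr ⟨a, hac⟩, hac⟩
  · rintro ⟨hlevel, hagent⟩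
    exact ⟨fun t => allNominated (u t), hlevel, hagent⟩
end

section
/- Every instance of the egalitarian (or equitable) committee sequence election problem with n agents is equivalent to an instance with at most n candidates: there exists an instance (A, C', U', k, x, y) with |C'| ≤ |A| that is a yes-instance if and only if the original instance (A, C, U, k, x, y) is. -/
open scoped Classical

noncomputable def EgalSolution {A C : Type*} [Fintype A] {τ : ℕ}
    (u : Fin τ → A → Option C) (k x y : ℕ) (Cs : Fin τ → Finset C) : Prop :=
  (∀ t, (Cs t).card ≤ k ∧ x ≤ levelScore (u t) (Cs t)) ∧ ∀ a, y ≤ agentScore u Cs a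

noncomputable def EquitSolution {A C : Type*} [Fintype A] {τ : ℕ}
    (u : Fin τ → A → Option C) (k x y : ℕ) (Cs : Fin τ → Finset C) : Prop :=
  (∀ t, (Cs t).card ≤ k ∧ x ≤ levelScore (u t) (Cs t)) ∧ ∀ a, agentScore u Cs a = y

/-- Every instance with `n` agents is equivalent to one over a candidate set of size at most
`n` (here `Fin (Fintype.card A)`), for both the egalitarian and the equitable variant. -/
theorem candidate_reduction {A C : Type*} [Fintype A] {τ : ℕ}
    (u : Fin τ → A → Option C) (k x y : ℕ) :
    ∃ u' : Fin τ → A → Option (Fin (Fintype.card A)),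
      ((∃ Cs : Fin τ → Finset C, EgalSolution u k x y Cs) ↔
        (∃ Cs' : Fin τ → Finset (Fin (Fintype.card A)), EgalSolution u' k x y Cs')) ∧
      ((∃ Cs : Fin τ → Finset C, EquitSolution u k x y Cs) ↔
        (∃ Cs' : Fin τ → Finset (Fin (Fintype.card A)), EquitSolution u' k x y Cs')) := by
  classical
  set e := Fintype.equivFin A with he
  set u' : Fin τ → A → Option (Fin (Fintype.card A)) :=
    fun t a => (u t a).bind
      (fun c => if h : ∃ b, u t b = some c then some (e h.choose) else none) with hu'
  -- L1: basic properties of representatives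
  have L1 : ∀ t a f, u' t a = some f →
      u t (e.symm f) = u t a ∧ u' t (e.symm f) = some f := by
    intro t a f h
    match hc : u t a with
    | none => rw [hu'] at h; simp [hc] at h
    | some c =>
      have hex : ∃ b, u t b = some c := ⟨a, hc⟩
      rw [hu'] at h
      simp only [hc, Option.bind_some, dif_pos hex, Option.some.injEq] at h
      subst h
      have hsp : u t hex.choose = some c := hex.choose_spec
      have hsymm : e.symm (e hex.choose) = hex.choose := e.symm_apply_apply _
      constructor
      · rw [hsymm, hsp]
      · rw [hu']
        simp only [hsymm, hsp, Option.bind_some, dif_pos hex]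
  have L2 : ∀ t a b, u t a = u t b → u' t a = u' t b := by
    intro t a b h; rw [hu']; simp only [h]
  have L3 : ∀ t a c, u t a = some c → ∃ f, u' t a = some f := by
    intro t a c h
    refine ⟨e (⟨a, h⟩ : ∃ b, u t b = some c).choose, ?_⟩
    rw [hu']; simp only [h, Option.bind_some, dif_pos (⟨a, h⟩ : ∃ b, u t b = some c)]
  -- forward transport
  have fwd : ∀ Cs : Fin τ → Finset C, ∃ Cs' : Fin τ → Finset (Fin (Fintype.card A)),
      (∀ t, (Cs' t).card ≤ (Cs t).card) ∧
      ∀ t a, (∃ c ∈ Cs t, u t a = some c) ↔ (∃ f ∈ Cs' t, u' t a = some f) := by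
    intro Cs
    refine ⟨fun t => Finset.univ.filter
      (fun f => (∃ c ∈ Cs t, u t (e.symm f) = some c) ∧ u' t (e.symm f) = some f), ?_, ?_⟩
    · intro t
      have hinj : Set.InjOn (fun f => u t (e.symm f))
          ↑(Finset.univ.filter
            (fun f => (∃ c ∈ Cs t, u t (e.symm f) = some c) ∧ u' t (e.symm f) = some f)) := by
        intro f1 h1 f2 h2 heq
        simp only [Finset.coe_filter, Set.mem_setOf_eq] at h1 h2
        have e1 := h1.2.2
        have e2 := h2.2.2
        have := L2 t (e.symm f1) (e.symm f2) heq
        rw [e1, e2] at this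
        exact Option.some_injective _ this
      have hmaps : ∀ f ∈ Finset.univ.filter
          (fun f => (∃ c ∈ Cs t, u t (e.symm f) = some c) ∧ u' t (e.symm f) = some f),
          u t (e.symm f) ∈ (Cs t).image some := by
        intro f hf
        simp only [Finset.mem_filter] at hf
        obtain ⟨c, hcS, hc⟩ := hf.2.1
        rw [hc]
        exact Finset.mem_image_of_mem _ hcS
      have := Finset.card_le_card_of_injOn _ hmaps hinj
      rwa [Finset.card_image_of_injective _ (Option.some_injective C)] at this
    · intro t a
      constructor
      · rintro ⟨c, hcS, hc⟩
        obtain ⟨f, hf⟩ := L3 t a c hc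
        obtain ⟨h1, h2⟩ := L1 t a f hf
        refine ⟨f, Finset.mem_filter.2 ⟨Finset.mem_univ _, ⟨c, hcS, h1.trans hc⟩, h2⟩, hf⟩
      · rintro ⟨f, hfS, hf⟩
        simp only [Finset.mem_filter] at hfS
        obtain ⟨c, hcS, hcf⟩ := hfS.2.1
        obtain ⟨h1, -⟩ := L1 t a f hf
        exact ⟨c, hcS, by rw [← h1]; exact hcf⟩
  -- backward transport
  have bwd : ∀ Cs' : Fin τ → Finset (Fin (Fintype.card A)), ∃ Cs : Fin τ → Finset C,
      (∀ t, (Cs t).card ≤ (Cs' t).card) ∧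
      ∀ t a, (∃ c ∈ Cs t, u t a = some c) ↔ (∃ f ∈ Cs' t, u' t a = some f) := by
    intro Cs'
    set F : Fin τ → Finset (Fin (Fintype.card A)) :=
      fun t => (Cs' t).filter
        (fun f => u' t (e.symm f) = some f ∧ (u t (e.symm f)).isSome) with hF
    refine ⟨fun t => (F t).attach.image
      (fun x => (u t (e.symm x.1)).get ((Finset.mem_filter.1 x.2).2.2)), ?_, ?_⟩
    · intro t
      calc ((F t).attach.image _).card ≤ (F t).attach.card := Finset.card_image_le
        _ = (F t).card := Finset.card_attach
        _ ≤ (Cs' t).card := Finset.card_filter_le _ _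
    · intro t a
      constructor
      · rintro ⟨c, hcS, hc⟩
        simp only [Finset.mem_image, Finset.mem_attach, true_and, Subtype.exists] at hcS
        obtain ⟨f, hfF, hfc⟩ := hcS
        have hmem := Finset.mem_filter.1 hfF
        have hval : u t (e.symm f) = some c := by
          rw [← hfc]; exact (Option.some_get _).symm
        have : u' t a = u' t (e.symm f) := L2 t a (e.symm f) (by rw [hc, hval])
        rw [hmem.2.1] at this
        exact ⟨f, hmem.1, this⟩
      · rintro ⟨f, hfS, hf⟩
        obtain ⟨h1, h2⟩ := L1 t a f hf
        have hsome : (u t a).isSome := by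
          by_contra hn
          rw [Option.not_isSome_iff_eq_none] at hn
          rw [hu'] at hf; simp [hn] at hf
        have hsome' : (u t (e.symm f)).isSome := by rw [h1]; exact hsome
        have hfF : f ∈ F t := Finset.mem_filter.2 ⟨hfS, h2, hsome'⟩
        refine ⟨(u t (e.symm f)).get hsome', ?_, ?_⟩
        · exact Finset.mem_image_of_mem _ (Finset.mem_attach _ ⟨f, hfF⟩)
        · rw [← h1]; exact (Option.some_get _).symm
  -- score preservation
  have scoreEq : ∀ (Cs : Fin τ → Finset C) (Cs' : Fin τ → Finset (Fin (Fintype.card A))),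
      (∀ t a, (∃ c ∈ Cs t, u t a = some c) ↔ (∃ f ∈ Cs' t, u' t a = some f)) →
      (∀ t, levelScore (u t) (Cs t) = levelScore (u' t) (Cs' t)) ∧
      (∀ a, agentScore u Cs a = agentScore u' Cs' a) := by
    intro Cs Cs' hind
    constructor
    · intro t
      unfold levelScore
      congr 1
      apply Finset.ext
      intro a
      simp only [Finset.mem_filter, Finset.mem_univ, true_and]
      exact hind t a
    · intro a
      unfold agentScore
      congr 1
      apply Finset.ext
      intro t
      simp only [Finset.mem_filter, Finset.mem_univ, true_and]
      exact hind t a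
  refine ⟨u', ?_, ?_⟩
  · constructor
    · rintro ⟨Cs, hk, hag⟩
      obtain ⟨Cs', hcard, hind⟩ := fwd Cs
      obtain ⟨hlev, hagent⟩ := scoreEq Cs Cs' hind
      refine ⟨Cs', fun t => ⟨(hcard t).trans (hk t).1, (hlev t) ▸ (hk t).2⟩,
        fun a => (hagent a) ▸ hag a⟩
    · rintro ⟨Cs', hk, hag⟩
      obtain ⟨Cs, hcard, hind⟩ := bwd Cs'
      obtain ⟨hlev, hagent⟩ := scoreEq Cs Cs' hind
      refine ⟨Cs, fun t => ⟨(hcard t).trans (hk t).1, (hlev t) ▸ (hk t).2⟩,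
        fun a => (hagent a) ▸ hag a⟩
  · constructor
    · rintro ⟨Cs, hk, hag⟩
      obtain ⟨Cs', hcard, hind⟩ := fwd Cs
      obtain ⟨hlev, hagent⟩ := scoreEq Cs Cs' hind
      refine ⟨Cs', fun t => ⟨(hcard t).trans (hk t).1, (hlev t) ▸ (hk t).2⟩,
        fun a => (hagent a) ▸ hag a⟩
    · rintro ⟨Cs', hk, hag⟩
      obtain ⟨Cs, hcard, hind⟩ := bwd Cs'
      obtain ⟨hlev, hagent⟩ := scoreEq Cs Cs' hind
      refine ⟨Cs, fun t => ⟨(hcard t).trans (hk t).1, (hlev t) ▸ (hk t).2⟩,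
        fun a => (hagent a) ▸ hag a⟩
end

section
/- Correctness of the reduction from Constraint Bipartite Vertex Cover to two-level egalitarian committee sequence election: let G = (V_1 ⊎ V_2, E) be a bipartite graph and k ∈ ℕ. Construct agents A = E, candidates C = V_1 ∪ V_2, and two levels where the agent corresponding to edge {v_1, v_2} (with v_i ∈ V_i) nominates v_1 in level 1 and v_2 in level 2. Then there exist sets X_1 ⊆ V_1, X_2 ⊆ V_2 with |X_1| ≤ k, |X_2| ≤ k and X_1 ∪ X_2 a vertex cover of G, if and only if there exist committees C_1, C_2 ⊆ C with |C_1| ≤ k, |C_2| ≤ k such that every agent (edge) has its level-1 nominee in C_1 or its level-2 nominee in C_2. -/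
/-- Correctness of the reduction from Constraint Bipartite Vertex Cover to two-level
egalitarian committee sequence election: a bipartite graph (given by its edge set
`E ⊆ V₁ × V₂`) has a vertex cover using at most `k` vertices from each side iff in the
constructed two-level instance (agents = edges, candidates = `V₁ ⊕ V₂`, the agent of edge
`(v₁, v₂)` nominating `v₁` in level 1 and `v₂` in level 2) there are committees of size at
most `k` satisfying every agent in at least one level. -/
theorem cbvc_reduction_correct {V₁ V₂ : Type*} [DecidableEq V₁] [DecidableEq V₂]
    (E : Finset (V₁ × V₂)) (k : ℕ) :
    (∃ (X₁ : Finset V₁) (X₂ : Finset V₂),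
        X₁.card ≤ k ∧ X₂.card ≤ k ∧ ∀ e ∈ E, e.1 ∈ X₁ ∨ e.2 ∈ X₂) ↔
    (∃ C₁ C₂ : Finset (V₁ ⊕ V₂),
        C₁.card ≤ k ∧ C₂.card ≤ k ∧ ∀ e ∈ E, Sum.inl e.1 ∈ C₁ ∨ Sum.inr e.2 ∈ C₂) := by
  constructor
  · rintro ⟨X₁, X₂, h₁, h₂, hcov⟩
    refine ⟨X₁.image Sum.inl, X₂.image Sum.inr,
      le_trans Finset.card_image_le h₁, le_trans Finset.card_image_le h₂, ?_⟩
    intro e he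
    rcases hcov e he with h | h
    · exact Or.inl (Finset.mem_image_of_mem _ h)
    · exact Or.inr (Finset.mem_image_of_mem _ h)
  · rintro ⟨C₁, C₂, h₁, h₂, hcov⟩
    refine ⟨C₁.toLeft, C₂.toRight, le_trans Finset.card_toLeft_le h₁,
      le_trans Finset.card_toRight_le h₂, ?_⟩
    intro e he
    rcases hcov e he with h | h
    · exact Or.inl (Finset.mem_toLeft.2 h)
    · exact Or.inr (Finset.mem_toRight.2 h)
end

section
/- Structural lemma for the 3-SAT reduction: consider the instance constructed from a 3-CNF formula with N variables, where C = {c_i, c̄_i : i ∈ [N]}, k = N, τ = 3, y = 1, x = 0, and for each i the six variable agents a_{i,1}, a_{i,2}, a_{i,3}, ā_{i,1}, ā_{i,2}, ā_{i,3} nominate as follows: a_{i,1}: (c_i, ∅, c̄_i), a_{i,2}: (c̄_i, c_i, ∅), a_{i,3}: (∅, c̄_i, c_i), ā_{i,1}: (c̄_i, ∅, c_i), ā_{i,2}: (c_i, c̄_i, ∅), ā_{i,3}: (∅, c_i, c̄_i). Then for every solution (C_1, C_2, C_3) of the egalitarian problem, it holds that |C_j ∩ {c_i, c̄_i}| = 1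 for all j ∈ {1,2,3} and i ∈ [N], and moreover C_j ∩ {c_i, c̄_i} = C_{j'} ∩ {c_i, c̄_i} for all j, j' ∈ {1,2,3}. -/
/-- Nominations of the six variable agents of variable `i` in the 3-SAT reduction.
Candidate `cᵢ` is `(i, true)` and `c̄ᵢ` is `(i, false)`. Agent indices `0,…,5` correspond
to `a_{i,1}, a_{i,2}, a_{i,3}, ā_{i,1}, ā_{i,2}, ā_{i,3}`. -/
def varNom (N : ℕ) (t : Fin 3) (a : Fin N × Fin 6) : Option (Fin N × Bool) :=
  match (a.2 : ℕ), (t : ℕ) with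
  | 0, 0 => some (a.1, true)
  | 0, 2 => some (a.1, false)
  | 1, 0 => some (a.1, false)
  | 1, 1 => some (a.1, true)
  | 2, 1 => some (a.1, false)
  | 2, 2 => some (a.1, true)
  | 3, 0 => some (a.1, false)
  | 3, 2 => some (a.1, true)
  | 4, 0 => some (a.1, true)
  | 4, 1 => some (a.1, false)
  | 5, 1 => some (a.1, true)
  | 5, 2 => some (a.1, false)
  | _, _ => none

lemma inter_pair_card {α : Type*} [DecidableEq α] {a b : α} (hab : a ≠ b) (S : Finset α) :
    (S ∩ {a, b}).card = (if a ∈ S then 1 else 0) + (if b ∈ S then 1 else 0) := by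
  by_cases ha : a ∈ S <;> by_cases hb : b ∈ S <;>
    simp [Finset.inter_comm, Finset.insert_inter_of_mem, Finset.insert_inter_of_notMem,
      Finset.singleton_inter_of_mem, Finset.singleton_inter_of_notMem, ha, hb, hab]

lemma inter_pair_left {α : Type*} [DecidableEq α] {S : Finset α} {a b : α}
    (ha : a ∈ S) (hb : b ∉ S) : S ∩ {a, b} = {a} := by
  ext c
  simp only [Finset.mem_inter, Finset.mem_insert, Finset.mem_singleton]
  constructor
  · rintro ⟨hc, rfl | rfl⟩
    · rfl
    · exact absurd hc hb
  · rintro rfl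
    exact ⟨ha, Or.inl rfl⟩

lemma inter_pair_right {α : Type*} [DecidableEq α] {S : Finset α} {a b : α}
    (ha : a ∉ S) (hb : b ∈ S) : S ∩ {a, b} = {b} := by
  ext c
  simp only [Finset.mem_inter, Finset.mem_insert, Finset.mem_singleton]
  constructor
  · rintro ⟨hc, rfl | rfl⟩
    · exact absurd hc ha
    · rfl
  · rintro rfl
    exact ⟨hb, Or.inr rfl⟩

/-- Structural lemma for the 3-SAT reduction: in any solution (committees of size at most
`N` satisfying every agent at least once), for every variable `i` each committee contains
exactly one of `{cᵢ, c̄ᵢ}`, and the same one in all three levels. Additional clause agents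
`B` (with arbitrary nominations `w`) must also be satisfied but do not affect the claim. -/
theorem threelevels_structure {N : ℕ} {B : Type*}
    (w : Fin 3 → B → Option (Fin N × Bool))
    (Cs : Fin 3 → Finset (Fin N × Bool))
    (hk : ∀ j, (Cs j).card ≤ N)
    (hvar : ∀ v : Fin N × Fin 6, ∃ j, ∃ c ∈ Cs j, varNom N j v = some c)
    (hclause : ∀ b : B, ∃ j, ∃ c ∈ Cs j, w j b = some c) :
    ∀ (i : Fin N) (j j' : Fin 3),
      (Cs j ∩ ({(i, true), (i, false)} : Finset (Fin N × Bool))).card = 1 ∧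
      Cs j ∩ ({(i, true), (i, false)} : Finset (Fin N × Bool)) =
        Cs j' ∩ ({(i, true), (i, false)} : Finset (Fin N × Bool)) := by
  classical
  -- six disjunctions per variable, from the six variable agents
  have H1 : ∀ i : Fin N, (i, true) ∈ Cs 0 ∨ (i, false) ∈ Cs 2 := by
    intro i
    obtain ⟨j, c, hc, he⟩ := hvar (i, 0)
    fin_cases j <;> simp [varNom] at he
    · exact Or.inl (he ▸ hc)
    · exact Or.inr (he ▸ hc)
  have H2 : ∀ i : Fin N, (i, false) ∈ Cs 0 ∨ (i, true) ∈ Cs 1 := by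
    intro i
    obtain ⟨j, c, hc, he⟩ := hvar (i, 1)
    fin_cases j <;> simp [varNom] at he
    · exact Or.inl (he ▸ hc)
    · exact Or.inr (he ▸ hc)
  have H3 : ∀ i : Fin N, (i, false) ∈ Cs 1 ∨ (i, true) ∈ Cs 2 := by
    intro i
    obtain ⟨j, c, hc, he⟩ := hvar (i, 2)
    fin_cases j <;> simp [varNom] at he
    · exact Or.inl (he ▸ hc)
    · exact Or.inr (he ▸ hc)
  have H4 : ∀ i : Fin N, (i, false) ∈ Cs 0 ∨ (i, true) ∈ Cs 2 := by
    intro i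
    obtain ⟨j, c, hc, he⟩ := hvar (i, 3)
    fin_cases j <;> simp [varNom] at he
    · exact Or.inl (he ▸ hc)
    · exact Or.inr (he ▸ hc)
  have H5 : ∀ i : Fin N, (i, true) ∈ Cs 0 ∨ (i, false) ∈ Cs 1 := by
    intro i
    obtain ⟨j, c, hc, he⟩ := hvar (i, 4)
    fin_cases j <;> simp [varNom] at he
    · exact Or.inl (he ▸ hc)
    · exact Or.inr (he ▸ hc)
  have H6 : ∀ i : Fin N, (i, true) ∈ Cs 1 ∨ (i, false) ∈ Cs 2 := by
    intro i
    obtain ⟨j, c, hc, he⟩ := hvar (i, 5)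
    fin_cases j <;> simp [varNom] at he
    · exact Or.inl (he ▸ hc)
    · exact Or.inr (he ▸ hc)
  have hne : ∀ i : Fin N, ((i, true) : Fin N × Bool) ≠ (i, false) := by simp
  -- 0/1 indicator facts
  have hmemT : ∀ (i : Fin N) (j : Fin 3),
      (if (i, true) ∈ Cs j then (1:ℕ) else 0) = 1 ↔ (i, true) ∈ Cs j := by
    intro i j; split <;> simp_all
  have hmemF : ∀ (i : Fin N) (j : Fin 3),
      (if (i, false) ∈ Cs j then (1:ℕ) else 0) = 1 ↔ (i, false) ∈ Cs j := by
    intro i j; split <;> simp_all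
  have hbT : ∀ (i : Fin N) (j : Fin 3),
      (if (i, true) ∈ Cs j then (1:ℕ) else 0) = 0 ∨
      (if (i, true) ∈ Cs j then (1:ℕ) else 0) = 1 := by
    intro i j; split <;> simp
  have hbF : ∀ (i : Fin N) (j : Fin 3),
      (if (i, false) ∈ Cs j then (1:ℕ) else 0) = 0 ∨
      (if (i, false) ∈ Cs j then (1:ℕ) else 0) = 1 := by
    intro i j; split <;> simp
  -- fiberwise counting: the pairs partition the candidate set
  have hfiber : ∀ j : Fin 3,
      ∑ i : Fin N, (Cs j ∩ ({(i, true), (i, false)} : Finset (Fin N × Bool))).card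
        = (Cs j).card := by
    intro j
    have h := Finset.card_eq_sum_card_fiberwise
      (f := Prod.fst) (s := Cs j) (t := (Finset.univ : Finset (Fin N)))
      (fun x _ => Finset.mem_univ _)
    rw [h]
    refine Finset.sum_congr rfl fun i _ => ?_
    congr 1
    ext ⟨i', b⟩
    cases b <;> simp [Prod.ext_iff, and_comm]
  -- lower bound 3 per variable
  have hge : ∀ i : Fin N, 3 ≤ ∑ j : Fin 3,
      (Cs j ∩ ({(i, true), (i, false)} : Finset (Fin N × Bool))).card := by
    intro i
    have h1 := (H1 i).imp (hmemT i 0).2 (hmemF i 2).2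
    have h2 := (H2 i).imp (hmemF i 0).2 (hmemT i 1).2
    have h3 := (H3 i).imp (hmemF i 1).2 (hmemT i 2).2
    have h4 := (H4 i).imp (hmemF i 0).2 (hmemT i 2).2
    have h5 := (H5 i).imp (hmemT i 0).2 (hmemF i 1).2
    have h6 := (H6 i).imp (hmemT i 1).2 (hmemF i 2).2
    rw [Fin.sum_univ_three, inter_pair_card (hne i), inter_pair_card (hne i),
      inter_pair_card (hne i)]
    omega
  -- total upper bound
  have htot : ∑ i : Fin N, ∑ j : Fin 3,
      (Cs j ∩ ({(i, true), (i, false)} : Finset (Fin N × Bool))).card ≤ 3 * N := by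
    rw [Finset.sum_comm]
    calc ∑ j : Fin 3, ∑ i : Fin N,
          (Cs j ∩ ({(i, true), (i, false)} : Finset (Fin N × Bool))).card
        = ∑ j : Fin 3, (Cs j).card := Finset.sum_congr rfl fun j _ => hfiber j
      _ ≤ ∑ _j : Fin 3, N := Finset.sum_le_sum fun j _ => hk j
      _ = 3 * N := by simp [Finset.sum_const, mul_comm]
  -- hence equality 3 per variable
  have heq : ∀ i : Fin N, ∑ j : Fin 3,
      (Cs j ∩ ({(i, true), (i, false)} : Finset (Fin N × Bool))).card = 3 := by
    have hsum_eq : (∑ _i : Fin N, (3:ℕ)) = ∑ i : Fin N, ∑ j : Fin 3,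
        (Cs j ∩ ({(i, true), (i, false)} : Finset (Fin N × Bool))).card := by
      refine le_antisymm (Finset.sum_le_sum fun i _ => hge i) ?_
      simpa [Finset.sum_const, mul_comm] using htot
    intro i
    exact ((Finset.sum_eq_sum_iff_of_le (fun i _ => hge i)).mp hsum_eq i
      (Finset.mem_univ i)).symm
  -- main structural claim
  have main : ∀ i : Fin N, ∃ b : Bool, ∀ j : Fin 3,
      Cs j ∩ ({(i, true), (i, false)} : Finset (Fin N × Bool)) = {(i, b)} := by
    intro i
    have hsum := heq i
    rw [Fin.sum_univ_three, inter_pair_card (hne i), inter_pair_card (hne i),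
      inter_pair_card (hne i)] at hsum
    have h1 := (H1 i).imp (hmemT i 0).2 (hmemF i 2).2
    have h2 := (H2 i).imp (hmemF i 0).2 (hmemT i 1).2
    have h3 := (H3 i).imp (hmemF i 1).2 (hmemT i 2).2
    have h4 := (H4 i).imp (hmemF i 0).2 (hmemT i 2).2
    have h5 := (H5 i).imp (hmemT i 0).2 (hmemF i 1).2
    have h6 := (H6 i).imp (hmemT i 1).2 (hmemF i 2).2
    have bT0 := hbT i 0; have bT1 := hbT i 1; have bT2 := hbT i 2
    have bF0 := hbF i 0; have bF1 := hbF i 1; have bF2 := hbF i 2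
    have pattern :
        ((if (i, true) ∈ Cs 0 then (1:ℕ) else 0) = 1 ∧
         (if (i, true) ∈ Cs 1 then (1:ℕ) else 0) = 1 ∧
         (if (i, true) ∈ Cs 2 then (1:ℕ) else 0) = 1 ∧
         (if (i, false) ∈ Cs 0 then (1:ℕ) else 0) = 0 ∧
         (if (i, false) ∈ Cs 1 then (1:ℕ) else 0) = 0 ∧
         (if (i, false) ∈ Cs 2 then (1:ℕ) else 0) = 0) ∨
        ((if (i, false) ∈ Cs 0 then (1:ℕ) else 0) = 1 ∧
         (if (i, false) ∈ Cs 1 then (1:ℕ) else 0) = 1 ∧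
         (if (i, false) ∈ Cs 2 then (1:ℕ) else 0) = 1 ∧
         (if (i, true) ∈ Cs 0 then (1:ℕ) else 0) = 0 ∧
         (if (i, true) ∈ Cs 1 then (1:ℕ) else 0) = 0 ∧
         (if (i, true) ∈ Cs 2 then (1:ℕ) else 0) = 0) := by
      omega
    have toMem : ∀ (x : Fin N × Bool) (j : Fin 3),
        (if x ∈ Cs j then (1:ℕ) else 0) = 0 → x ∉ Cs j := by
      intro x j h hx
      simp [hx] at h
    rcases pattern with ⟨p0, p1, p2, q0, q1, q2⟩ | ⟨p0, p1, p2, q0, q1, q2⟩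
    · refine ⟨true, fun j => ?_⟩
      fin_cases j
      · exact inter_pair_left ((hmemT i 0).1 p0) (toMem _ 0 q0)
      · exact inter_pair_left ((hmemT i 1).1 p1) (toMem _ 1 q1)
      · exact inter_pair_left ((hmemT i 2).1 p2) (toMem _ 2 q2)
    · refine ⟨false, fun j => ?_⟩
      fin_cases j
      · exact inter_pair_right (toMem _ 0 q0) ((hmemF i 0).1 p0)
      · exact inter_pair_right (toMem _ 1 q1) ((hmemF i 1).1 p1)
      · exact inter_pair_right (toMem _ 2 q2) ((hmemF i 2).1 p2)
  intro i j j'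
  obtain ⟨b, hb⟩ := main i
  rw [hb j, hb j']
  exact ⟨Finset.card_singleton _, rfl⟩
end

section
/- Correctness of the SAT-to-GCSE reduction: let φ = K_1 ∧ … ∧ K_M be a CNF formula over variables x_1,…,x_N. Construct an instance with agents a_1,…,a_M, candidates {c_⊤, c_⊥}, τ = N levels, k = 1, x = 0, y = 1, where in level i agent a_j nominates c_⊤ if x_i appears unnegated in K_j, c_⊥ if x_i appears negated in K_j, and ∅ otherwise. Then φ is satisfiable if and only if there is a sequence C_1,…,C_N of subsets of {c_⊤, c_⊥} of size at most 1 such that every agent a_j has u_i(a_j) ∈ C_i for at least one level i. -/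
/-- Correctness of the SAT-to-GCSE reduction. A CNF formula over variables `x₁,…,x_N` with
clauses `K₁,…,K_M` is encoded by `K : Fin M → Fin N → Option Bool`, where `K j i = some
true` if `xᵢ` appears unnegated in `K_j`, `some false` if negated, `none` otherwise; a
truth assignment `f` satisfies clause `j` iff `∃ i, K j i = some (f i)`. The formula is
satisfiable iff the constructed instance (agents = clauses, candidates `{c_⊤, c_⊥} = Bool`,
level `i` nomination of agent `j` being `K j i`, `k = 1`, `x = 0`, `y = 1`) has a sequence
of committees of size at most 1 satisfying every agent in at least one level. -/
theorem sat_reduction_correct {N M : ℕ} (K : Fin M → Fin N → Option Bool) :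
    (∃ f : Fin N → Bool, ∀ j, ∃ i, K j i = some (f i)) ↔
    (∃ Cs : Fin N → Finset Bool,
        (∀ i, (Cs i).card ≤ 1) ∧ ∀ j, ∃ i, ∃ c ∈ Cs i, K j i = some c) := by
  constructor
  · rintro ⟨f, hf⟩
    refine ⟨fun i => {f i}, fun i => by simp, fun j => ?_⟩
    obtain ⟨i, hi⟩ := hf j
    exact ⟨i, f i, by simp, hi⟩
  · rintro ⟨Cs, hcard, hsat⟩
    refine ⟨fun i => decide (true ∈ Cs i), fun j => ?_⟩
    obtain ⟨i, c, hc, hK⟩ := hsat j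
    refine ⟨i, ?_⟩
    cases c with
    | true => simpa [hc] using hK
    | false =>
      have ht : true ∉ Cs i := by
        intro ht
        have : ({true, false} : Finset Bool).card ≤ (Cs i).card :=
          Finset.card_le_card (by intro b; fin_cases b <;> simp [ht, hc])
        simp at this
        have := hcard i; omega
      simpa [ht] using hK
end

section
/- Fingerprint branching lemma (egalitarian case): let I = (A, C, U, (k_t)_t, (x_t)_t, (y_a)_{a∈A}) be a pre-elected egalitarian instance and a ∈ A an agent with y_a > 0 that has some fingerprint with at least y_a non-empty entries. Then I is a yes-instance if and only if for some fingerprint X ∈ {u_1(a), ∅} × … × {u_τ(a), ∅} with at least y_a non-empty entries, the reduced instance I_X is a yes-instance, where I_X has agents A \ {a}, levels with k'_t = k_t − |X_t|, x'_t = x_t − |{a' ∈ A : u_t(a') = X_t ∧ X_t ≠ ∅}|, utility u'_t(a') = u_t(a') unless u_t(a') = u_t(a), in which case u'_t(a') = ∅, and requirements y'_{a'} = y_{a'} − ∑_{t=1}^τ |u_t(a') ∩ X_t|. -/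
open scoped Classical

noncomputable def lScore {A C : Type*} [Fintype A] (u : A → Option C) (S : Finset C) : ℕ :=
  (Finset.univ.filter fun a => ∃ c ∈ S, u a = some c).card

/-- A solution of a pre-elected egalitarian instance: per-level size bounds `k t`,
per-level score requirements `x t` and per-agent requirements `y a` (possibly negative,
in which case they are vacuous). -/
noncomputable def PESolvable {A C : Type*} [Fintype A] {τ : ℕ}
    (u : Fin τ → A → Option C) (k x : Fin τ → ℤ) (y : A → ℤ) : Prop :=
  ∃ Cs : Fin τ → Finset C,
    (∀ t, ((Cs t).card : ℤ) ≤ k t) ∧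
    (∀ t, x t ≤ (lScore (u t) (Cs t) : ℤ)) ∧
    ∀ a, y a ≤ ((Finset.univ.filter fun t => ∃ c ∈ Cs t, u t a = some c).card : ℤ)

/-- A fingerprint of agent `a`: a tuple in `{u₁(a), ∅} × ⋯ × {u_τ(a), ∅}`. -/
def IsFingerprint {A C : Type*} {τ : ℕ} (u : Fin τ → A → Option C) (a : A)
    (X : Fin τ → Option C) : Prop :=
  ∀ t, X t = u t a ∨ X t = none

set_option maxHeartbeats 1000000 in
lemma card_subtype_filter {A : Type*} [Fintype A] (a : A) (p : A → Prop)
    (q : {b : A // b ≠ a} → Prop) [DecidablePred q]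
    [DecidablePred (fun b : A => b ≠ a ∧ p b)]
    (hpq : ∀ (b : A) (h : b ≠ a), q ⟨b, h⟩ ↔ p b) :
    (Finset.univ.filter q).card
      = (Finset.univ.filter (fun b : A => b ≠ a ∧ p b)).card := by
  refine Finset.card_bij (fun a' _ => a'.1) ?_ ?_ ?_
  · rintro ⟨b, hb⟩ ha'
    simp only [Finset.mem_filter, Finset.mem_univ, true_and] at ha' ⊢
    exact ⟨hb, (hpq b hb).mp ha'⟩
  · intro x _ y _ h
    exact Subtype.ext h
  · intro b hb
    simp only [Finset.mem_filter, Finset.mem_univ, true_and] at hb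
    refine ⟨⟨b, hb.1⟩, ?_, rfl⟩
    simp only [Finset.mem_filter, Finset.mem_univ, true_and]
    exact (hpq b hb.1).mpr hb.2

set_option maxHeartbeats 1000000 in
/-- Fingerprint branching lemma (egalitarian case): if agent `a` has `y a > 0` and some
fingerprint with at least `y a` non-empty entries, then the instance is a yes-instance iff
for some such fingerprint `X` the reduced instance (obtained by deleting `a`, decreasing
`k t` by `|X t|`, decreasing `x t` by the number of agents nominating `X t` at level `t`,
blanking all nominations equal to `u t a`, and decreasing each `y a'` by the number of
levels where `a'` nominates `X t ≠ ∅`) is a yes-instance. -/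
theorem fingerprint_branching {A C : Type*} [Fintype A] {τ : ℕ}
    (u : Fin τ → A → Option C) (k x : Fin τ → ℤ) (y : A → ℤ) (a : A)
    (hy : 0 < y a)
    (hfp : ∃ X : Fin τ → Option C, IsFingerprint u a X ∧
        y a ≤ ((Finset.univ.filter fun t => X t ≠ none).card : ℤ)) :
    PESolvable u k x y ↔
      ∃ X : Fin τ → Option C, IsFingerprint u a X ∧
        y a ≤ ((Finset.univ.filter fun t => X t ≠ none).card : ℤ) ∧
        PESolvable
          (fun t (a' : {b : A // b ≠ a}) => if u t a'.1 = u t a then none else u t a'.1)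
          (fun t => k t - (if X t = none then 0 else 1))
          (fun t => x t -
            ((Finset.univ.filter fun a' : A => u t a' = X t ∧ X t ≠ none).card : ℤ))
          (fun a' => y a'.1 -
            ((Finset.univ.filter fun t => u t a'.1 = X t ∧ X t ≠ none).card : ℤ)) := by
  constructor
  · rintro ⟨Cs, hk, hx, hcov⟩
    set X : Fin τ → Option C :=
      fun t => if ∃ c ∈ Cs t, u t a = some c then u t a else none with hXdef
    have hXfp : IsFingerprint u a X := by
      intro t
      by_cases h : ∃ c ∈ Cs t, u t a = some c <;> simp [hXdef, h]
    have hXne : ∀ t, X t ≠ none ↔ ∃ c ∈ Cs t, u t a = some c := by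
      intro t
      by_cases h : ∃ c ∈ Cs t, u t a = some c
      · obtain ⟨c, _, hc⟩ := h
        simp [hXdef, hc]
      · simp [hXdef, h]
    have hXeq : ∀ t, X t ≠ none → X t = u t a := by
      intro t ht
      rcases hXfp t with h | h
      · exact h
      · exact absurd h ht
    -- count of nonempty entries
    have hcount : y a ≤ ((Finset.univ.filter fun t => X t ≠ none).card : ℤ) := by
      have : (Finset.univ.filter fun t => X t ≠ none)
          = Finset.univ.filter fun t => ∃ c ∈ Cs t, u t a = some c := by
        apply Finset.filter_congr
        intro t _
        simp [hXne t]
      rw [this]; exact hcov a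
    -- the reduced solution
    set Cs' : Fin τ → Finset C := fun t => (X t).elim (Cs t) (fun c => (Cs t).erase c)
      with hCs'def
    refine ⟨X, hXfp, hcount, Cs', ?_, ?_, ?_⟩
    · -- size bounds
      intro t
      rcases hXc : X t with _ | c
      · simpa [hCs'def, hXc] using hk t
      · have hcmem : c ∈ Cs t := by
          have h1 : X t = u t a := hXeq t (by simp [hXc])
          have h2 : ∃ c' ∈ Cs t, u t a = some c' := (hXne t).mp (by simp [hXc])
          obtain ⟨c', hc', he⟩ := h2
          have hcc : some c' = some c := by rw [← he, ← h1, hXc]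
          rw [Option.some.injEq] at hcc
          exact hcc ▸ hc'
        have hpos : 0 < (Cs t).card := Finset.card_pos.mpr ⟨c, hcmem⟩
        have := hk t
        simp only [hCs'def, hXc, Option.elim, Finset.card_erase_of_mem hcmem]
        push_cast [hpos]
        omega
    · -- score bounds
      intro t
      set F := Finset.univ.filter fun b : A => ∃ c ∈ Cs t, u t b = some c with hF
      set G := Finset.univ.filter fun b : A =>
        b ≠ a ∧ ∃ c ∈ Cs' t, (if u t b = u t a then none else u t b) = some c with hG
      set H := Finset.univ.filter fun b : A => u t b = X t ∧ X t ≠ none with hH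
      have hls : lScore
          (fun a' : {b : A // b ≠ a} => if u t a'.1 = u t a then none else u t a'.1)
          (Cs' t) = G.card := by
        rw [hG]
        exact card_subtype_filter a
          (fun b => ∃ c ∈ Cs' t, (if u t b = u t a then none else u t b) = some c)
          _ (fun b h => Iff.rfl)
      have hsub : F ⊆ G ∪ H := by
        intro b hb
        simp only [hF, Finset.mem_filter, Finset.mem_univ, true_and] at hb
        obtain ⟨c, hcin, hbc⟩ := hb
        by_cases hba : u t b = u t a
        · have hne : X t ≠ none := (hXne t).mpr ⟨c, hcin, hba ▸ hbc⟩
          have : u t b = X t := by rw [hXeq t hne, hba]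
          simp only [Finset.mem_union, hH, Finset.mem_filter, Finset.mem_univ, true_and]
          exact Or.inr ⟨this, hne⟩
        · have hbna : b ≠ a := fun h => hba (by rw [h])
          have hcin' : c ∈ Cs' t := by
            rcases hXc : X t with _ | c₀
            · simpa [hCs'def, hXc] using hcin
            · have h1 : some c₀ = u t a := by rw [← hXc, hXeq t (by simp [hXc])]
              have hcne : c ≠ c₀ := by
                intro h
                apply hba
                rw [hbc, h, h1]
              simp only [hCs'def, hXc, Option.elim]
              exact Finset.mem_erase.mpr ⟨hcne, hcin⟩
          simp only [Finset.mem_union, hG, Finset.mem_filter, Finset.mem_univ, true_and]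
          exact Or.inl ⟨hbna, c, hcin', by rw [if_neg hba]; exact hbc⟩
      have h1 : F.card ≤ G.card + H.card :=
        le_trans (Finset.card_le_card hsub) (Finset.card_union_le _ _)
      have h3 : x t ≤ (F.card : ℤ) := hx t
      show x t - ((Finset.univ.filter fun a' : A => u t a' = X t ∧ X t ≠ none).card : ℤ)
        ≤ _
      rw [hls]
      have h4 : ((Finset.univ.filter fun a' : A => u t a' = X t ∧ X t ≠ none).card : ℤ)
          = (H.card : ℤ) := by rw [hH]
      rw [h4]
      push_cast
      omega
    · -- coverage bounds
      rintro ⟨b, hb⟩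
      set T := Finset.univ.filter fun t => ∃ c ∈ Cs t, u t b = some c with hT
      set T' := Finset.univ.filter fun t =>
        ∃ c ∈ Cs' t, (if u t b = u t a then none else u t b) = some c with hT'
      set S := Finset.univ.filter fun t => u t b = X t ∧ X t ≠ none with hS
      have hsub : T ⊆ T' ∪ S := by
        intro t ht
        simp only [hT, Finset.mem_filter, Finset.mem_univ, true_and] at ht
        obtain ⟨c, hcin, hbc⟩ := ht
        by_cases hba : u t b = u t a
        · have hne : X t ≠ none := (hXne t).mpr ⟨c, hcin, hba ▸ hbc⟩
          have : u t b = X t := by rw [hXeq t hne, hba]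
          simp only [Finset.mem_union, hS, Finset.mem_filter, Finset.mem_univ, true_and]
          exact Or.inr ⟨this, hne⟩
        · have hcin' : c ∈ Cs' t := by
            rcases hXc : X t with _ | c₀
            · simpa [hCs'def, hXc] using hcin
            · have h1 : some c₀ = u t a := by rw [← hXc, hXeq t (by simp [hXc])]
              have hcne : c ≠ c₀ := by
                intro h
                apply hba
                rw [hbc, h, h1]
              simp only [hCs'def, hXc, Option.elim]
              exact Finset.mem_erase.mpr ⟨hcne, hcin⟩
          simp only [Finset.mem_union, hT', Finset.mem_filter, Finset.mem_univ, true_and]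
          exact Or.inl ⟨c, hcin', by rw [if_neg hba]; exact hbc⟩
      have h1 : T.card ≤ T'.card + S.card :=
        le_trans (Finset.card_le_card hsub) (Finset.card_union_le _ _)
      have h2 : y b ≤ (T.card : ℤ) := hcov b
      show y b - ((Finset.univ.filter fun t => u t b = X t ∧ X t ≠ none).card : ℤ)
        ≤ (T'.card : ℤ)
      have h4 : ((Finset.univ.filter fun t => u t b = X t ∧ X t ≠ none).card : ℤ)
          = (S.card : ℤ) := by rw [hS]
      rw [h4]
      push_cast
      omega
  · rintro ⟨X, hXfp, hcount, Cs', hk', hx', hcov'⟩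
    have hXa : ∀ t, X t ≠ none → X t = u t a := by
      intro t ht
      rcases hXfp t with h | h
      · exact h
      · exact absurd h ht
    set Cs : Fin τ → Finset C := fun t => (X t).elim (Cs' t) (fun c => insert c (Cs' t))
      with hCsdef
    have hsubCs : ∀ t, Cs' t ⊆ Cs t := by
      intro t
      rcases hXc : X t with _ | c
      · simp [hCsdef, hXc]
      · simp only [hCsdef, hXc, Option.elim]
        exact Finset.subset_insert _ _
    refine ⟨Cs, ?_, ?_, ?_⟩
    · intro t
      have h1 : ((Cs' t).card : ℤ) ≤ k t - (if X t = none then 0 else 1) := hk' t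
      rcases hXc : X t with _ | c
      · rw [hXc] at h1
        norm_num at h1
        have h2 : Cs t = Cs' t := by simp [hCsdef, hXc]
        rw [h2]
        omega
      · rw [hXc, if_neg (by simp)] at h1
        have h2 : (Cs t).card ≤ (Cs' t).card + 1 := by
          simp only [hCsdef, hXc, Option.elim]
          exact Finset.card_insert_le _ _
        push_cast at h2 ⊢
        omega
    · intro t
      set F := Finset.univ.filter fun b : A => ∃ c ∈ Cs t, u t b = some c with hF
      set G := Finset.univ.filter fun b : A =>
        b ≠ a ∧ ∃ c ∈ Cs' t, (if u t b = u t a then none else u t b) = some c with hG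
      set H := Finset.univ.filter fun b : A => u t b = X t ∧ X t ≠ none with hH
      have hls : lScore
          (fun a' : {b : A // b ≠ a} => if u t a'.1 = u t a then none else u t a'.1)
          (Cs' t) = G.card := by
        rw [hG]
        exact card_subtype_filter a
          (fun b => ∃ c ∈ Cs' t, (if u t b = u t a then none else u t b) = some c)
          _ (fun b h => Iff.rfl)
      have hdisj : Disjoint G H := by
        rw [Finset.disjoint_left]
        intro b hbG hbH
        simp only [hG, Finset.mem_filter, Finset.mem_univ, true_and] at hbG
        simp only [hH, Finset.mem_filter, Finset.mem_univ, true_and] at hbH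
        obtain ⟨_, c, _, hc⟩ := hbG
        have : u t b = u t a := by rw [hbH.1, hXa t hbH.2]
        simp [this] at hc
      have hGF : G ⊆ F := by
        intro b hbG
        simp only [hG, Finset.mem_filter, Finset.mem_univ, true_and] at hbG
        obtain ⟨_, c, hcin, hc⟩ := hbG
        by_cases hba : u t b = u t a
        · simp [hba] at hc
        · simp only [hba, reduceIte] at hc
          simp only [hF, Finset.mem_filter, Finset.mem_univ, true_and]
          exact ⟨c, hsubCs t hcin, hc⟩
      have hHF : H ⊆ F := by
        intro b hbH
        simp only [hH, Finset.mem_filter, Finset.mem_univ, true_and] at hbH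
        obtain ⟨hbX, hne⟩ := hbH
        rcases hXc : X t with _ | c
        · exact absurd hXc hne
        · simp only [hF, Finset.mem_filter, Finset.mem_univ, true_and]
          refine ⟨c, ?_, by rw [hbX, hXc]⟩
          simp [hCsdef, hXc]
      have h1 : G.card + H.card ≤ F.card := by
        rw [← Finset.card_union_of_disjoint hdisj]
        exact Finset.card_le_card (Finset.union_subset hGF hHF)
      have h2 : x t - ((Finset.univ.filter
            fun a' : A => u t a' = X t ∧ X t ≠ none).card : ℤ)
          ≤ (lScore (fun a' : {b : A // b ≠ a} =>
              if u t a'.1 = u t a then none else u t a'.1) (Cs' t) : ℤ) := hx' t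
      rw [hls] at h2
      have h4 : ((Finset.univ.filter fun a' : A => u t a' = X t ∧ X t ≠ none).card : ℤ)
          = (H.card : ℤ) := by rw [hH]
      rw [h4] at h2
      show x t ≤ (F.card : ℤ)
      push_cast at h2 ⊢
      omega
    · intro b
      by_cases hba : b = a
      · subst hba
        have hsub : (Finset.univ.filter fun t => X t ≠ none)
            ⊆ Finset.univ.filter fun t => ∃ c ∈ Cs t, u t b = some c := by
          intro t ht
          simp only [Finset.mem_filter, Finset.mem_univ, true_and] at ht ⊢
          rcases hXc : X t with _ | c
          · exact absurd hXc ht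
          · refine ⟨c, ?_, ?_⟩
            · simp [hCsdef, hXc]
            · rw [← hXa t ht, hXc]
        calc y b ≤ _ := hcount
          _ ≤ _ := by exact_mod_cast Finset.card_le_card hsub
      · have hcb := hcov' ⟨b, hba⟩
        set T := Finset.univ.filter fun t => ∃ c ∈ Cs t, u t b = some c with hT
        set T'' := Finset.univ.filter fun t =>
          ∃ c ∈ Cs' t, (if u t b = u t a then none else u t b) = some c with hT''
        set S := Finset.univ.filter fun t => u t b = X t ∧ X t ≠ none with hS
        have hdisj : Disjoint T'' S := by
          rw [Finset.disjoint_left]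
          intro t htT htS
          simp only [hT'', Finset.mem_filter, Finset.mem_univ, true_and] at htT
          simp only [hS, Finset.mem_filter, Finset.mem_univ, true_and] at htS
          obtain ⟨c, _, hc⟩ := htT
          have : u t b = u t a := by rw [htS.1, hXa t htS.2]
          simp [this] at hc
        have hT''T : T'' ⊆ T := by
          intro t ht
          simp only [hT'', Finset.mem_filter, Finset.mem_univ, true_and] at ht
          obtain ⟨c, hcin, hc⟩ := ht
          by_cases hba' : u t b = u t a
          · simp [hba'] at hc
          · simp only [hba', reduceIte] at hc
            simp only [hT, Finset.mem_filter, Finset.mem_univ, true_and]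
            exact ⟨c, hsubCs t hcin, hc⟩
        have hST : S ⊆ T := by
          intro t ht
          simp only [hS, Finset.mem_filter, Finset.mem_univ, true_and] at ht
          obtain ⟨hbX, hne⟩ := ht
          rcases hXc : X t with _ | c
          · exact absurd hXc hne
          · simp only [hT, Finset.mem_filter, Finset.mem_univ, true_and]
            refine ⟨c, ?_, by rw [hbX, hXc]⟩
            simp [hCsdef, hXc]
        have h1 : T''.card + S.card ≤ T.card := by
          rw [← Finset.card_union_of_disjoint hdisj]
          exact Finset.card_le_card (Finset.union_subset hT''T hST)
        have h2 : y b - ((Finset.univ.filter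
              fun t => u t b = X t ∧ X t ≠ none).card : ℤ) ≤ (T''.card : ℤ) := hcb
        have h4 : ((Finset.univ.filter fun t => u t b = X t ∧ X t ≠ none).card : ℤ)
            = (S.card : ℤ) := by rw [hS]
        rw [h4] at h2
        show y b ≤ (T.card : ℤ)
        push_cast at h2 ⊢
        omega
end

section
/- Non-critical sufficiency: consider an egalitarian committee sequence election instance with n agents and requirement y. For an agent a, let Z(a) be the set of levels t for which there exists a committee C' ⊆ C with |C'| ≤ k, committee score |{a' : u_t(a') ∈ C'}| ≥ x, and u_t(a) ∈ C'. If |Z(a)| > n·y for every agent a (in fact |Z(a)| ≥ n·y suffices), then the instance is a yes-instance. -/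
open scoped Classical

/-- `Z a`: the set of levels admitting a valid committee (size `≤ k`, score `≥ x`)
containing `a`'s nominated candidate. -/
noncomputable def Zset {A C : Type*} [Fintype A] {τ : ℕ}
    (u : Fin τ → A → Option C) (k x : ℕ) (a : A) : Finset (Fin τ) :=
  Finset.univ.filter fun t =>
    ∃ S : Finset C, S.card ≤ k ∧ x ≤ levelScore (u t) S ∧ ∃ c ∈ S, u t a = some c

/-- Greedy disjoint assignment of `y` levels to each agent. -/
lemma exists_disjoint_assignment {A C : Type*} [Fintype A] {τ : ℕ}
    (u : Fin τ → A → Option C) (k x y : ℕ)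
    (hZ : ∀ a, Fintype.card A * y ≤ (Zset u k x a).card) :
    ∀ s : Finset A, ∃ Y : A → Finset (Fin τ),
      (∀ a ∈ s, Y a ⊆ Zset u k x a ∧ (Y a).card = y) ∧
      (∀ a ∈ s, ∀ b ∈ s, a ≠ b → Disjoint (Y a) (Y b)) := by
  intro s
  induction s using Finset.induction_on with
  | empty => exact ⟨fun _ => ∅, by simp, by simp⟩
  | @insert a s ha ih =>
    obtain ⟨Y, h1, h2⟩ := ih
    set used := s.biUnion Y with hused_def
    have hused : used.card ≤ s.card * y := by
      calc used.card ≤ ∑ b ∈ s, (Y b).card := Finset.card_biUnion_le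
        _ ≤ ∑ _b ∈ s, y := Finset.sum_le_sum fun b hb => (h1 b hb).2.le
        _ = s.card * y := by simp [Finset.sum_const, Nat.smul_one_eq_cast, mul_comm]
    have hcard : s.card + 1 ≤ Fintype.card A := by
      have := Finset.card_le_univ (insert a s)
      rwa [Finset.card_insert_of_notMem ha] at this
    have hbig : y ≤ ((Zset u k x a) \ used).card := by
      have h3 : y + s.card * y ≤ Fintype.card A * y := by
        have : (s.card + 1) * y ≤ Fintype.card A * y := Nat.mul_le_mul_right y hcard
        nlinarith
      calc y ≤ Fintype.card A * y - s.card * y := Nat.le_sub_of_add_le (by linarith)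
        _ ≤ (Zset u k x a).card - used.card := tsub_le_tsub (hZ a) hused
        _ ≤ ((Zset u k x a) \ used).card := Finset.le_card_sdiff _ _
    obtain ⟨Y', hY'sub, hY'card⟩ := Finset.exists_subset_card_eq hbig
    refine ⟨Function.update Y a Y', ?_, ?_⟩
    · intro b hb
      rcases Finset.mem_insert.1 hb with rfl | hb
      · simp only [Function.update_self]
        exact ⟨hY'sub.trans (Finset.sdiff_subset), hY'card⟩
      · rw [Function.update_of_ne (ne_of_mem_of_not_mem hb ha)]
        exact h1 b hb
    · have key : ∀ b ∈ s, Disjoint Y' (Y b) := by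
        intro b hb
        have h4 : Y b ⊆ used := Finset.subset_biUnion_of_mem Y hb
        exact Finset.disjoint_left.2 fun t ht ht' =>
          (Finset.mem_sdiff.1 (hY'sub ht)).2 (h4 ht')
      intro b hb c hc hbc
      rcases Finset.mem_insert.1 hb with hb' | hb' <;>
        rcases Finset.mem_insert.1 hc with hc' | hc'
      · exact absurd (hb'.trans hc'.symm) hbc
      · subst hb'
        rw [Function.update_self, Function.update_of_ne (ne_of_mem_of_not_mem hc' ha)]
        exact key c hc'
      · subst hc'
        rw [Function.update_self, Function.update_of_ne (ne_of_mem_of_not_mem hb' ha)]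
        exact (key b hb').symm
      · rw [Function.update_of_ne (ne_of_mem_of_not_mem hb' ha),
          Function.update_of_ne (ne_of_mem_of_not_mem hc' ha)]
        exact h2 b hb' c hc' hbc


/-- Non-critical sufficiency: if every level admits a valid committee and every agent `a`
has `|Z a| ≥ n·y` (where `n` is the number of agents), then the instance is a
yes-instance of the egalitarian problem. -/
theorem noncritical_sufficiency {A C : Type*} [Fintype A] {τ : ℕ}
    (u : Fin τ → A → Option C) (k x y : ℕ)
    (hvalid : ∀ t, ∃ S : Finset C, S.card ≤ k ∧ x ≤ levelScore (u t) S)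
    (hZ : ∀ a, Fintype.card A * y ≤ (Zset u k x a).card) :
    ∃ Cs : Fin τ → Finset C,
      (∀ t, (Cs t).card ≤ k ∧ x ≤ levelScore (u t) (Cs t)) ∧
      ∀ a, y ≤ (Finset.univ.filter fun t => ∃ c ∈ Cs t, u t a = some c).card := by
  obtain ⟨Y, h1, h2⟩ := exists_disjoint_assignment u k x y hZ Finset.univ
  simp only [Finset.mem_univ, forall_true_left, true_implies] at h1 h2
  have hpick : ∀ t : Fin τ, ∃ S : Finset C, S.card ≤ k ∧ x ≤ levelScore (u t) S ∧
      (∀ a, t ∈ Y a → ∃ c ∈ S, u t a = some c) := by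
    intro t
    by_cases h : ∃ a, t ∈ Y a
    · obtain ⟨a, hta⟩ := h
      have hz : t ∈ Zset u k x a := (h1 a).1 hta
      simp only [Zset, Finset.mem_filter, Finset.mem_univ, true_and] at hz
      obtain ⟨S, hk, hx, hc⟩ := hz
      refine ⟨S, hk, hx, fun b htb => ?_⟩
      have : b = a := by
        by_contra hne
        exact (Finset.disjoint_left.1 (h2 b a hne) htb) hta
      rw [this]; exact hc
    · obtain ⟨S, hk, hx⟩ := hvalid t
      exact ⟨S, hk, hx, fun a hta => absurd ⟨a, hta⟩ h⟩
  choose Cs hCs1 hCs2 hCs3 using hpick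
  refine ⟨Cs, fun t => ⟨hCs1 t, hCs2 t⟩, fun a => ?_⟩
  have hsub : Y a ⊆ Finset.univ.filter fun t => ∃ c ∈ Cs t, u t a = some c := by
    intro t ht
    exact Finset.mem_filter.2 ⟨Finset.mem_univ t, hCs3 t a ht⟩
  calc y = (Y a).card := ((h1 a).2).symm
    _ ≤ _ := Finset.card_le_card hsub
end

section
/- Correctness of the OR-composition for GCSE with two candidates: let I_1,…,I_p with p = 2^q be instances of the egalitarian problem, each with candidate set C = {c_0, c_1}, k = 1, x = 0, y = 1, each I_j on agent set A_j with τ levels. Build the combined instance on agents A = A_1 ∪ … ∪ A_p with τ + q levels: the first τ levels replicate each instance's nominations on its own agents (agents of other instances nominate ∅), and in extra level τ + i (i ∈ [q]) every agent of A_j nominates c_b where b is the i-th bit of the q-bit binary encoding of j. Then the combined instance is a yes-instance if and only if at least one of I_1,…,I_p is a yes-instance. -/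
open scoped Classical

/-- Yes-instance predicate for an instance of the egalitarian problem with candidate set
`{c₀, c₁} = Bool`, `k = 1`, `x = 0`, `y = 1`: committees of size at most 1 such that every
agent's nominee is selected in at least one level. -/
def OneSolvable {A : Type*} {L : ℕ} (u : Fin L → A → Option Bool) : Prop :=
  ∃ Cs : Fin L → Finset Bool,
    (∀ l, (Cs l).card ≤ 1) ∧ ∀ a, ∃ l, ∃ c ∈ Cs l, u l a = some c

lemma exists_nat_testBit (q : ℕ) (b : ℕ → Bool) :
    ∃ r, r < 2 ^ q ∧ ∀ i < q, r.testBit i = b i := by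
  induction q with
  | zero => exact ⟨0, by norm_num, fun i hi => by omega⟩
  | succ q ih =>
    obtain ⟨r, hr, hb⟩ := ih
    by_cases hq : b q = true
    · refine ⟨2 ^ q + r, by omega, fun i hi => ?_⟩
      rcases Nat.lt_succ_iff_lt_or_eq.mp hi with h | h
      · rw [Nat.testBit_two_pow_add_gt h, hb i h]
      · subst h
        rw [Nat.testBit_two_pow_add_eq, Nat.testBit_eq_false_of_lt hr, hq]
        rfl
    · refine ⟨r, by omega, fun i hi => ?_⟩
      rcases Nat.lt_succ_iff_lt_or_eq.mp hi with h | h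
      · exact hb i h
      · rw [h, Nat.testBit_eq_false_of_lt hr]
        exact (Bool.not_eq_true _).mp hq |>.symm

/-- Correctness of the OR-composition for GCSE with two candidates: given `p = 2^q`
instances `I₁,…,I_p` (agent types `A j`, nominations `v j`, `τ` levels each), the combined
instance on all agents with `τ + q` levels — replicating each instance's nominations in
the first `τ` levels and letting, in extra level `τ + i`, every agent of `A j` nominate
the candidate given by the `i`-th bit of the binary encoding of `j` — is a yes-instance
iff at least one `I_j` is. -/
theorem or_composition_correct (q τ : ℕ) (A : Fin (2 ^ q) → Type*)
    (v : (j : Fin (2 ^ q)) → Fin τ → A j → Option Bool) :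
    OneSolvable (fun (l : Fin (τ + q)) (a : Σ j, A j) =>
        if h : (l : ℕ) < τ then v a.1 ⟨l, h⟩ a.2
        else some (Nat.testBit (a.1 : ℕ) ((l : ℕ) - τ))) ↔
    ∃ j, OneSolvable (v j) := by
  constructor
  · rintro ⟨Cs, hcard, hsat⟩
    -- the bad index r : complement of the bits chosen in the extra levels
    set b : ℕ → Bool := fun i =>
      if hi : i < q then !(decide (true ∈ Cs ⟨τ + i, by omega⟩)) else false with hbdef
    have hbnot : ∀ i (hi : i < q), b i ∉ Cs ⟨τ + i, by omega⟩ := by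
      intro i hi hmem
      simp only [hbdef, dif_pos hi] at hmem
      by_cases ht : true ∈ Cs ⟨τ + i, by omega⟩
      · simp only [ht, decide_eq_true_eq, Bool.not_true] at hmem
        have hmem' : (false : Bool) ∈ Cs ⟨τ + i, by omega⟩ := by simpa [ht] using hmem
        have := Finset.card_le_one.mp (hcard _) _ hmem' _ ht
        simp at this
      · have hmem' : (true : Bool) ∈ Cs ⟨τ + i, by omega⟩ := by simpa [ht] using hmem
        exact ht hmem'
    obtain ⟨r, hr, hrb⟩ := exists_nat_testBit q b
    refine ⟨⟨r, hr⟩, fun l => Cs ⟨l, by omega⟩, fun l => hcard _, fun a => ?_⟩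
    obtain ⟨l, c, hc, hv⟩ := hsat ⟨⟨r, hr⟩, a⟩
    by_cases h : (l : ℕ) < τ
    · refine ⟨⟨l, h⟩, c, ?_, ?_⟩
      · exact hc
      · simp only [dif_pos h] at hv
        exact hv
    · exfalso
      simp only [dif_neg h] at hv
      have hi : (l : ℕ) - τ < q := by omega
      have hc' : c = b ((l : ℕ) - τ) := by
        have h1 := hrb _ hi
        injection hv with hv'
        rw [← hv', h1]
      apply hbnot ((l : ℕ) - τ) hi
      have hl : (⟨τ + ((l : ℕ) - τ), by omega⟩ : Fin (τ + q)) = l := Fin.ext (by simp; omega)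
      rw [hl, ← hc']
      exact hc
  · rintro ⟨j, Cs, hcard, hsat⟩
    refine ⟨fun l => if h : (l : ℕ) < τ then Cs ⟨l, h⟩
        else {!(Nat.testBit (j : ℕ) ((l : ℕ) - τ))}, fun l => ?_, ?_⟩
    · by_cases h : (l : ℕ) < τ <;> simp [h, hcard]
    · rintro ⟨j', a⟩
      by_cases hj : j' = j
      · subst hj
        obtain ⟨l, c, hc, hv⟩ := hsat a
        refine ⟨⟨l, by omega⟩, c, ?_, ?_⟩
        · simp only [l.isLt, dif_pos]
          exact hc
        · simp only [l.isLt, dif_pos]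
          exact hv
      · -- find a differing bit
        have hne : (j' : ℕ) ≠ (j : ℕ) := fun h => hj (Fin.ext h)
        have : ∃ i < q, Nat.testBit (j' : ℕ) i ≠ Nat.testBit (j : ℕ) i := by
          by_contra hcon
          push_neg at hcon
          apply hne
          apply Nat.eq_of_testBit_eq
          intro i
          by_cases hi : i < q
          · exact hcon i hi
          · rw [Nat.testBit_eq_false_of_lt, Nat.testBit_eq_false_of_lt]
            · exact lt_of_lt_of_le j.isLt (Nat.pow_le_pow_right (by norm_num) (by omega))
            · exact lt_of_lt_of_le j'.isLt (Nat.pow_le_pow_right (by norm_num) (by omega))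
        obtain ⟨i, hi, hbit⟩ := this
        refine ⟨⟨τ + i, by omega⟩, Nat.testBit (j' : ℕ) i, ?_, ?_⟩
        · have h1 : ¬ (τ + i < τ) := by omega
          simp only [h1, dif_neg, Nat.add_sub_cancel_left, Finset.mem_singleton]
          cases h2 : Nat.testBit (j : ℕ) i <;> simp_all
        · have h1 : ¬ (τ + i < τ) := by omega
          simp only [h1, dif_neg, Nat.add_sub_cancel_left]
          exact dif_neg id
end

section
/- Correctness of the 3-Partition reduction: let S = {s_1,…,s_n} be a multiset of n = 3m positive integers with ∑ s_i = T·m. Construct candidates c_1,…,c_n, agent groups A_1,…,A_n with |A_i| = s_i, m levels in each of which every agent of A_i nominates c_i, and set k = 3, x = T, y = 1. Then there is a partition of S into m triplets each summing to T if and only if there is a sequence C_1,…,C_m ⊆ {c_1,…,c_n} with |C_t| ≤ 3, committee score ∑_{c ∈ C_t} |{a : a nominates c}| ≥ T for every t, and every agent satisfied in at least one level. -/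
lemma eq_of_le_of_sum_le {α : Type*} {s : Finset α} {f g : α → ℕ}
    (h : ∀ i ∈ s, f i ≤ g i) (hs : ∑ i ∈ s, g i ≤ ∑ i ∈ s, f i) :
    ∀ i ∈ s, f i = g i := by
  by_contra hne
  push_neg at hne
  obtain ⟨i, hi, hne⟩ := hne
  have : ∑ j ∈ s, f j < ∑ j ∈ s, g j :=
    Finset.sum_lt_sum h ⟨i, hi, lt_of_le_of_ne (h i hi) hne⟩
  omega

/-- Correctness of the 3-Partition reduction: `n = 3m` positive integers `s i` summing to
`T·m` admit a partition into `m` triplets each summing to `T` iff the constructed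
instance (candidates `c₁,…,c_n`, `s i` agents always nominating `cᵢ`, `m` levels, `k = 3`,
`x = T`, `y = 1`) has a solution: committees `C₁,…,C_m` of size at most 3, per-level score
`∑_{cᵢ ∈ C_t} s i ≥ T`, and every agent satisfied at least once (equivalently, every
candidate chosen in some level). -/
theorem three_partition_reduction_correct (m T : ℕ) (s : Fin (3 * m) → ℕ)
    (hpos : ∀ i, 0 < s i) (hsum : ∑ i, s i = T * m) :
    (∃ P : Fin m → Finset (Fin (3 * m)),
        (∀ t, (P t).card = 3) ∧
        (∀ t t', t ≠ t' → Disjoint (P t) (P t')) ∧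
        (∀ i, ∃ t, i ∈ P t) ∧
        (∀ t, ∑ i ∈ P t, s i = T)) ↔
    (∃ Cs : Fin m → Finset (Fin (3 * m)),
        (∀ t, (Cs t).card ≤ 3) ∧
        (∀ t, T ≤ ∑ i ∈ Cs t, s i) ∧
        ∀ i, ∃ t, i ∈ Cs t) := by
  constructor
  · rintro ⟨P, hc, _, hcov, hsumP⟩
    exact ⟨P, fun t => (hc t).le, fun t => (hsumP t).ge, hcov⟩
  · rintro ⟨Cs, hcard, hscore, hcov⟩
    classical
    set M : Fin (3 * m) → ℕ := fun i => (Finset.univ.filter (fun t => i ∈ Cs t)).card with hM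
    have hM1 : ∀ i, 1 ≤ M i := by
      intro i
      obtain ⟨t, ht⟩ := hcov i
      exact Finset.card_pos.mpr ⟨t, Finset.mem_filter.mpr ⟨Finset.mem_univ t, ht⟩⟩
    have hdouble : ∀ f : Fin (3 * m) → ℕ,
        ∑ t, ∑ i ∈ Cs t, f i = ∑ i, M i * f i := by
      intro f
      have h1 : ∀ t, ∑ i ∈ Cs t, f i = ∑ i, if i ∈ Cs t then f i else 0 := by
        intro t; rw [Finset.sum_ite_mem, Finset.univ_inter]
      simp_rw [h1]
      rw [Finset.sum_comm]
      refine Finset.sum_congr rfl fun i _ => ?_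
      rw [Finset.sum_ite, Finset.sum_const, Finset.sum_const_zero, add_zero, smul_eq_mul]
    have hcards : ∑ t, (Cs t).card = ∑ i, M i := by
      have := hdouble (fun _ => 1)
      simpa using this
    have hMle : ∑ i, M i ≤ 3 * m := by
      rw [← hcards]
      calc ∑ t, (Cs t).card ≤ ∑ _t : Fin m, 3 := Finset.sum_le_sum fun t _ => hcard t
        _ = 3 * m := by simp [mul_comm]
    have hMeq : ∀ i, M i = 1 := by
      have h := eq_of_le_of_sum_le (s := Finset.univ) (f := fun _ => 1) (g := M)
        (fun i _ => hM1 i) (by simp only [Finset.sum_const, Finset.card_univ,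
          Fintype.card_fin, smul_eq_mul, mul_one]; exact hMle)
      intro i; exact (h i (Finset.mem_univ i)).symm
    -- each i is in exactly one committee
    have hdisj : ∀ t t', t ≠ t' → Disjoint (Cs t) (Cs t') := by
      intro t t' htt
      rw [Finset.disjoint_left]
      intro i hi hi'
      have hsub : ({t, t'} : Finset (Fin m)) ⊆
          Finset.univ.filter (fun u => i ∈ Cs u) := by
        intro u hu
        simp only [Finset.mem_insert, Finset.mem_singleton] at hu
        rcases hu with rfl | rfl <;> exact Finset.mem_filter.mpr ⟨Finset.mem_univ _, by assumption⟩
      have h2 : ({t, t'} : Finset (Fin m)).card = 2 := Finset.card_pair htt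
      have := Finset.card_le_card hsub
      rw [h2] at this
      have := hMeq i
      simp only [hM] at this
      omega
    -- cards are exactly 3
    have hsumcards : ∑ t, (Cs t).card = 3 * m := by
      rw [hcards]; simp [hMeq]
    have hcard3 : ∀ t, (Cs t).card = 3 := by
      have h := eq_of_le_of_sum_le (s := Finset.univ) (f := fun t => (Cs t).card) (g := fun _ => 3)
        (fun t _ => hcard t) (by rw [hsumcards]; simp [mul_comm])
      intro t; exact h t (Finset.mem_univ t)
    -- sums are exactly T
    have hsums : ∑ t, ∑ i ∈ Cs t, s i = T * m := by
      rw [hdouble s]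
      simp only [hMeq, one_mul]
      exact hsum
    have hsumT : ∀ t, ∑ i ∈ Cs t, s i = T := by
      have h := eq_of_le_of_sum_le (s := Finset.univ) (f := fun _ => T) (g := fun t => ∑ i ∈ Cs t, s i)
        (fun t _ => hscore t) (by rw [hsums]; simp [mul_comm])
      intro t; exact (h t (Finset.mem_univ t)).symm
    exact ⟨Cs, hcard3, hdisj, hcov, hsumT⟩
end

section
/- In the 3-Partition reduction instance, every solution (C_1,…,C_m) forms a partition of {c_1,…,c_n} into triples, and for every level t the committee score equals exactly x = T. -/
/-- In the 3-Partition reduction instance (`n = 3m` candidates, group sizes `s i` with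
`∑ s i = T·m`, `k = 3`, `x = T`, `y = 1`), every solution forms a partition of the
candidates into triples, and every level's committee score equals exactly `T`. -/
theorem three_partition_solution_structure (m T : ℕ) (s : Fin (3 * m) → ℕ)
    (hpos : ∀ i, 0 < s i) (hsum : ∑ i, s i = T * m)
    (Cs : Fin m → Finset (Fin (3 * m)))
    (hcard : ∀ t, (Cs t).card ≤ 3)
    (hscore : ∀ t, T ≤ ∑ i ∈ Cs t, s i)
    (hcover : ∀ i, ∃ t, i ∈ Cs t) :
    (∀ t, (Cs t).card = 3) ∧
    (∀ t t', t ≠ t' → Disjoint (Cs t) (Cs t')) ∧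
    (∀ t, ∑ i ∈ Cs t, s i = T) := by
  classical
  set N : Fin (3 * m) → ℕ := fun i => (Finset.univ.filter fun t => i ∈ Cs t).card with hN
  -- double counting with arbitrary weights
  have hswap : ∀ f : Fin (3 * m) → ℕ,
      ∑ t, ∑ i ∈ Cs t, f i = ∑ i, N i * f i := by
    intro f
    have h1 : ∀ t, ∑ i ∈ Cs t, f i = ∑ i, if i ∈ Cs t then f i else 0 := by
      intro t
      rw [Finset.sum_ite_mem, Finset.univ_inter]
    have h2 : ∀ i, N i * f i = ∑ t, if i ∈ Cs t then f i else 0 := by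
      intro i
      simp only [hN]
      rw [← Finset.sum_filter, Finset.sum_const, smul_eq_mul]
    simp only [h1, h2]
    exact Finset.sum_comm
  have hNone : ∀ i, 1 ≤ N i := by
    intro i
    obtain ⟨t, ht⟩ := hcover i
    exact Finset.card_pos.mpr ⟨t, by simp [ht]⟩
  -- total cards
  have hcards : ∑ t, (Cs t).card = ∑ i, N i := by
    simpa using hswap (fun _ => 1)
  have hcardsle : ∑ i, N i ≤ 3 * m := by
    rw [← hcards]
    calc ∑ t, (Cs t).card ≤ ∑ _t : Fin m, 3 := Finset.sum_le_sum fun t _ => hcard t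
    _ = 3 * m := by simp [mul_comm]
  have hNsum : (∑ i, N i) = ∑ _i : Fin (3 * m), 1 := by
    have : (∑ _i : Fin (3 * m), 1) = 3 * m := by simp
    have hge : ∑ _i : Fin (3 * m), 1 ≤ ∑ i, N i :=
      Finset.sum_le_sum fun i _ => hNone i
    omega
  have hN1 : ∀ i, N i = 1 := by
    intro i
    have := (Finset.sum_eq_sum_iff_of_le (fun i _ => hNone i)).mp hNsum.symm i (Finset.mem_univ i)
    omega
  -- multiplicity 1 gives disjointness
  have hdisj : ∀ t t', t ≠ t' → Disjoint (Cs t) (Cs t') := by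
    intro t t' htt'
    rw [Finset.disjoint_left]
    intro i hi hi'
    have h2 : ({t, t'} : Finset (Fin m)) ⊆ Finset.univ.filter fun u => i ∈ Cs u := by
      intro u hu
      simp only [Finset.mem_insert, Finset.mem_singleton] at hu
      rcases hu with rfl | rfl <;> simp [hi, hi']
    have := Finset.card_le_card h2
    rw [Finset.card_insert_of_notMem (by simpa using htt'), Finset.card_singleton] at this
    have := hN1 i
    simp only [hN] at this
    omega
  -- cards are exactly 3
  have hcard3 : ∀ t, (Cs t).card = 3 := by
    intro t
    have hsum3 : ∑ t, (Cs t).card = ∑ _t : Fin m, 3 := by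
      rw [hcards]
      simp [hN1, mul_comm]
    have := (Finset.sum_eq_sum_iff_of_le (fun t _ => hcard t)).mp hsum3 t (Finset.mem_univ t)
    omega
  -- scores are exactly T
  have hscoreT : ∀ t, ∑ i ∈ Cs t, s i = T := by
    intro t
    have htot : ∑ t, ∑ i ∈ Cs t, s i = ∑ _t : Fin m, T := by
      rw [hswap s]
      simp only [hN1, one_mul]
      simp only [Finset.sum_const, smul_eq_mul, Finset.card_univ, Fintype.card_fin, hsum]
      ring
    have := (Finset.sum_eq_sum_iff_of_le (fun t _ => hscore t)).mp htot.symm t (Finset.mem_univ t)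
    omega
  exact ⟨hcard3, hdisj, hscoreT⟩
end

section
/- Dynamic program correctness for the (n, y)-algorithm: define for an equitable committee sequence election instance with agents a_1,…,a_n the predicate D[t, (y_1,…,y_n)] to hold iff there exist committees C_1,…,C_t, each of size at most k and committee score at least x in its level, such that for every i, the number of levels s ≤ t with u_s(a_i) ∈ C_s equals y_i. Then D satisfies the recurrence: D[t, y⃗] holds iff there exists a vector y⃗' and a committee C' ⊆ C with |C'| ≤ k and |{a : u_t(a) ∈ C'}| ≥ x such that y⃗' + c⃗ = y⃗ and D[t−1, y⃗'] holds, where c⃗ ∈ {0,1}^n has c_i = 1 iff u_t(a_i) ∈ C'. Moreover the instance is a yes-instance iff D[τ, (y,…,y)] holds. -/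
open scoped Classical

/-- `DP u k x t yv` holds iff there are committees for the first `t` levels, each of size
at most `k` and level score at least `x`, such that agent `i`'s nominee is chosen in
exactly `yv i` of these levels. -/
noncomputable def DP {n τ : ℕ} {C : Type*} (u : Fin τ → Fin n → Option C) (k x : ℕ)
    (t : ℕ) (yv : Fin n → ℕ) : Prop :=
  ∃ Cs : Fin τ → Finset C,
    (∀ s : Fin τ, (s : ℕ) < t → (Cs s).card ≤ k ∧ x ≤ levelScore (u s) (Cs s)) ∧
    ∀ i, (Finset.univ.filter fun s : Fin τ =>
        (s : ℕ) < t ∧ ∃ c ∈ Cs s, u s i = some c).card = yv i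

/-!
A committee sequence for the first `t + 1` levels is a sequence for the first `t` levels with
one more valid committee at level `t` (levels are indexed from `0`), and the number of those
levels that choose agent `i`'s nominee is the count over the first `t` levels plus the bit of
the fingerprint of the new committee at `i`. At `t = τ` the bound `s < τ` holds for every level,
so `DP` at `τ` is exactly the existence of a solution.
-/

theorem Fin.card_filter_lt_succ {τ : ℕ} (t : ℕ) (ht : t < τ) (P : Fin τ → Prop)
    [DecidablePred P] :
    (Finset.univ.filter fun s : Fin τ => (s : ℕ) < t + 1 ∧ P s).card =
      (Finset.univ.filter fun s : Fin τ => (s : ℕ) < t ∧ P s).card +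
        if P ⟨t, ht⟩ then 1 else 0 := by
  split_ifs with hP
  · rw [← Finset.card_insert_of_notMem (s := Finset.univ.filter _) (a := ⟨t, ht⟩) (by simp)]
    congr 1
    ext s
    simp only [Finset.mem_filter, Finset.mem_univ, true_and, Finset.mem_insert, Fin.ext_iff]
    grind
  · rw [add_zero]
    congr 1
    ext s
    simp only [Finset.mem_filter, Finset.mem_univ, true_and]
    grind

section

variable {n τ : ℕ} {C : Type*} (u : Fin τ → Fin n → Option C) (k x : ℕ)

theorem DP_succ_iff (t : ℕ) (ht : t < τ) (yv : Fin n → ℕ) :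
    DP u k x (t + 1) yv ↔
      ∃ (yv' : Fin n → ℕ) (C' : Finset C),
        C'.card ≤ k ∧ x ≤ levelScore (u ⟨t, ht⟩) C' ∧
        (∀ i, yv i = yv' i + (if ∃ c ∈ C', u ⟨t, ht⟩ i = some c then 1 else 0)) ∧
        DP u k x t yv' := by
  constructor
  · rintro ⟨Cs, hvalid, hcount⟩
    obtain ⟨hk, hx⟩ := hvalid ⟨t, ht⟩ t.lt_succ_self
    refine ⟨_, Cs ⟨t, ht⟩, hk, hx, fun i => ?_, Cs, fun s hs => hvalid s (by omega), fun i => rfl⟩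
    rw [← hcount i, Fin.card_filter_lt_succ t ht]
  · rintro ⟨yv', C', hk, hx, hyv, Cs, hvalid, hcount⟩
    have hCs : ∀ s : Fin τ, (s : ℕ) < t → Function.update Cs ⟨t, ht⟩ C' s = Cs s :=
      fun s hs => Function.update_of_ne (Fin.ne_of_val_ne hs.ne) _ _
    refine ⟨Function.update Cs ⟨t, ht⟩ C', fun s hs => ?_, fun i => ?_⟩
    · rcases Nat.lt_succ_iff_lt_or_eq.1 hs with hs | hs
      · rw [hCs s hs]; exact hvalid s hs
      · obtain rfl : s = ⟨t, ht⟩ := Fin.ext hs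
        rw [Function.update_self]; exact ⟨hk, hx⟩
    · rw [hyv i, ← hcount i, Fin.card_filter_lt_succ t ht, Function.update_self]
      congr 2
      ext s
      simp +contextual only [Finset.mem_filter, Finset.mem_univ, true_and, and_congr_right_iff,
        hCs, implies_true]

theorem DP_horizon_iff (yv : Fin n → ℕ) :
    DP u k x τ yv ↔ ∃ Cs : Fin τ → Finset C,
      (∀ s, (Cs s).card ≤ k ∧ x ≤ levelScore (u s) (Cs s)) ∧
      ∀ i, (Finset.univ.filter fun s : Fin τ => ∃ c ∈ Cs s, u s i = some c).card = yv i := by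
  simp only [DP, Fin.is_lt, true_and, forall_const]

end

/-- Dynamic program correctness for the `(n, y)`-algorithm for the equitable problem:
`DP` satisfies the level-by-level recurrence (adding a valid committee `C'` for level `t`
whose fingerprint increments the agent score vector), and the instance is a yes-instance
iff `DP` holds at `τ` with the all-`y` vector. -/
theorem dp_correct {n τ : ℕ} {C : Type*} (u : Fin τ → Fin n → Option C) (k x y : ℕ) :
    (∀ (t : ℕ) (ht1 : 1 ≤ t) (ht : t ≤ τ) (yv : Fin n → ℕ),
      DP u k x t yv ↔
        ∃ (yv' : Fin n → ℕ) (C' : Finset C),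
          C'.card ≤ k ∧ x ≤ levelScore (u ⟨t - 1, by omega⟩) C' ∧
          (∀ i, yv i = yv' i +
            (if ∃ c ∈ C', u ⟨t - 1, by omega⟩ i = some c then 1 else 0)) ∧
          DP u k x (t - 1) yv') ∧
    ((∃ Cs : Fin τ → Finset C,
        (∀ s, (Cs s).card ≤ k ∧ x ≤ levelScore (u s) (Cs s)) ∧
        ∀ i, (Finset.univ.filter fun s : Fin τ => ∃ c ∈ Cs s, u s i = some c).card = y)
      ↔ DP u k x τ (fun _ => y)) := by
  refine ⟨fun t ht1 ht yv => ?_, (DP_horizon_iff u k x _).symm⟩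
  obtain ⟨t, rfl⟩ := Nat.exists_eq_add_of_le' ht1
  exact DP_succ_iff u k x t ht yv
end
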